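/- arXiv:1404.1963 — 3 statements merged into one kernel-verified Lean document; each statement's English description precedes it below -/
import Mathlib

section
/- If n ≥ 2, α₁ < α₂, and w̄ is a local minimizer of g(w) = (1/2)((1/2)‖w‖² − ν)² + (1/2)wᵀDw − ψᵀw, then (1/2)‖w̄‖² − ν + α₂ > 0 (the inequality is strict). -/
/-!
Write `λ = ½‖w̄‖² - ν` and suppose `λ + α₂ ≤ 0`, so `λ + α₁ < 0` (the paper's `α₁, α₂` are
`α 0, α 1` here). Along a line `w̄ + s v` the objective is a quartic in `s`, so a local minimum
gives stationarity `ψᵢ = (λ + αᵢ) w̄ᵢ` and `λ I + D + w̄ w̄ᵀ ⪰ 0`. Testing this form on `e₁`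
gives `w̄₁ ≠ 0`, and on `w̄₂ e₁ - w̄₁ e₂` gives `w̄₂ = 0`. On the sphere `‖u‖ = ‖w̄‖`,
stationarity turns `g u - g w̄` into `½ ∑ (λ + αᵢ) (uᵢ - w̄ᵢ)²`, so rotating `w̄` by a small
angle in the `(e₁, e₂)`-plane strictly decreases `g`.
-/

open Finset Filter Topology

lemma eq_zero_of_eventually_nonneg_mul {f : ℝ → ℝ} (hf : ContinuousAt f 0)
    (h : ∀ᶠ s in 𝓝 0, 0 ≤ s * f s) : f 0 = 0 := by
  apply le_antisymm
  · refine le_of_tendsto (hf.mono_left (nhdsWithin_le_nhds (s := Set.Iio 0))) ?_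
    filter_upwards [nhdsWithin_le_nhds h, self_mem_nhdsWithin] with s hs (hs0 : s < 0)
    exact nonpos_of_mul_nonneg_right hs hs0
  · refine ge_of_tendsto (hf.mono_left (nhdsWithin_le_nhds (s := Set.Ioi 0))) ?_
    filter_upwards [nhdsWithin_le_nhds h, self_mem_nhdsWithin] with s hs (hs0 : 0 < s)
    exact nonneg_of_mul_nonneg_right hs hs0

lemma nonneg_of_eventually_nonneg_sq_mul {f : ℝ → ℝ} (hf : ContinuousAt f 0)
    (h : ∀ᶠ s in 𝓝 0, 0 ≤ s ^ 2 * f s) : 0 ≤ f 0 := by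
  refine ge_of_tendsto (hf.mono_left (nhdsWithin_le_nhds (s := {0}ᶜ))) ?_
  filter_upwards [nhdsWithin_le_nhds h, self_mem_nhdsWithin] with s hs (hs0 : s ≠ 0)
  exact nonneg_of_mul_nonneg_right hs (by positivity)

lemma eq_zero_and_nonneg_of_eventually_nonneg_quartic {a b c d : ℝ}
    (h : ∀ᶠ s in 𝓝 0, 0 ≤ a * s + b * s ^ 2 + c * s ^ 3 + d * s ^ 4) : a = 0 ∧ 0 ≤ b := by
  have ha : a = 0 := by
    have := eq_zero_of_eventually_nonneg_mul (f := fun s => a + b * s + c * s ^ 2 + d * s ^ 3)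
      (by fun_prop) (h.mono fun s hs => hs.trans_eq (by ring))
    simpa using this
  refine ⟨ha, ?_⟩
  have := nonneg_of_eventually_nonneg_sq_mul (f := fun s => b + c * s + d * s ^ 2)
    (by fun_prop) (h.mono fun s hs => hs.trans_eq (by rw [ha]; ring))
  simpa using this

lemma Fintype.sum_apply_update {ι M : Type*} [Fintype ι] [DecidableEq ι] [AddCommGroup M]
    {β : Type*} (F : ι → β → M) (w : ι → β) (i : ι) (x : β) :
    ∑ k, F k (Function.update w i x k) = ∑ k, F k (w k) - F i (w i) + F i x := by
  simp_rw [Function.apply_update F, sum_update_of_mem (mem_univ i),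
    sum_eq_add_sum_sdiff_singleton_of_mem (mem_univ i) fun k => F k (w k)]
  abel

section QuarticObjective

variable {ι : Type*} [Fintype ι]

noncomputable def quarticObjective (α ψ : ι → ℝ) (ν : ℝ) (w : ι → ℝ) : ℝ :=
  1 / 2 * (1 / 2 * ∑ i, w i ^ 2 - ν) ^ 2 + 1 / 2 * ∑ i, α i * w i ^ 2 - ∑ i, ψ i * w i

/-- The `λ` of the optimality conditions: `∂g/∂wᵢ = (multiplier ν w + αᵢ) wᵢ - ψᵢ`. -/
noncomputable def multiplier (ν : ℝ) (w : ι → ℝ) : ℝ := 1 / 2 * ∑ i, w i ^ 2 - ν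

variable (α ψ : ι → ℝ) (ν : ℝ)

lemma quarticObjective_add_smul_sub (w v : ι → ℝ) (s : ℝ) :
    quarticObjective α ψ ν (w + s • v) - quarticObjective α ψ ν w =
      (∑ i, ((multiplier ν w + α i) * w i - ψ i) * v i) * s
      + ((multiplier ν w * ∑ i, v i ^ 2 + (∑ i, w i * v i) ^ 2 + ∑ i, α i * v i ^ 2) / 2) * s ^ 2
      + ((∑ i, w i * v i) * (∑ i, v i ^ 2) / 2) * s ^ 3
      + ((∑ i, v i ^ 2) ^ 2 / 8) * s ^ 4 := by
  have hsq : ∑ i, (w i + s * v i) ^ 2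
      = ∑ i, w i ^ 2 + 2 * s * ∑ i, w i * v i + s ^ 2 * ∑ i, v i ^ 2 := by
    rw [mul_sum, mul_sum, ← sum_add_distrib, ← sum_add_distrib]
    exact sum_congr rfl fun i _ => by ring
  have hα : ∑ i, α i * (w i + s * v i) ^ 2
      = ∑ i, α i * w i ^ 2 + 2 * s * ∑ i, α i * w i * v i + s ^ 2 * ∑ i, α i * v i ^ 2 := by
    rw [mul_sum, mul_sum, ← sum_add_distrib, ← sum_add_distrib]
    exact sum_congr rfl fun i _ => by ring
  have hψ : ∑ i, ψ i * (w i + s * v i) = ∑ i, ψ i * w i + s * ∑ i, ψ i * v i := by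
    rw [mul_sum, ← sum_add_distrib]
    exact sum_congr rfl fun i _ => by ring
  have hgrad : ∑ i, ((multiplier ν w + α i) * w i - ψ i) * v i
      = multiplier ν w * ∑ i, w i * v i + ∑ i, α i * w i * v i - ∑ i, ψ i * v i := by
    rw [mul_sum, ← sum_add_distrib, ← sum_sub_distrib]
    exact sum_congr rfl fun i _ => by ring
  simp only [quarticObjective, Pi.add_apply, Pi.smul_apply, smul_eq_mul]
  rw [hsq, hα, hψ, hgrad, multiplier]
  ring

lemma quarticObjective_sub_of_sum_sq_eq {w u : ι → ℝ}
    (hψ : ∀ i, ψ i = (multiplier ν w + α i) * w i) (hu : ∑ i, u i ^ 2 = ∑ i, w i ^ 2) :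
    quarticObjective α ψ ν u - quarticObjective α ψ ν w
      = 1 / 2 * ∑ i, (multiplier ν w + α i) * (u i - w i) ^ 2 := by
  set σ := multiplier ν w
  have key : ∑ i, (σ + α i) * (u i - w i) ^ 2
      = σ * (∑ i, u i ^ 2 - ∑ i, w i ^ 2) + ∑ i, α i * u i ^ 2 - ∑ i, α i * w i ^ 2
        - 2 * ∑ i, (σ + α i) * w i * (u i - w i) := by
    simp only [mul_sum, ← sum_sub_distrib, ← sum_add_distrib]
    exact sum_congr rfl fun i _ => by ring
  have hlin : ∑ i, ψ i * u i - ∑ i, ψ i * w i = ∑ i, (σ + α i) * w i * (u i - w i) := by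
    rw [← sum_sub_distrib]
    exact sum_congr rfl fun i _ => by rw [hψ]; ring
  rw [hu, sub_self, mul_zero, zero_add] at key
  rw [quarticObjective, quarticObjective, hu]
  linear_combination (-1/2) * key - hlin

end QuarticObjective

namespace IsLocalMin

variable {ι : Type*} [Fintype ι] {α ψ : ι → ℝ} {ν : ℝ} {w : ι → ℝ}

lemma quarticObjective_optimality (h : IsLocalMin (quarticObjective α ψ ν) w) (v : ι → ℝ) :
    ∑ i, ((multiplier ν w + α i) * w i - ψ i) * v i = 0 ∧
      0 ≤ multiplier ν w * ∑ i, v i ^ 2 + (∑ i, w i * v i) ^ 2 + ∑ i, α i * v i ^ 2 := by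
  have hline : IsLocalMin (quarticObjective α ψ ν ∘ fun s : ℝ => w + s • v) 0 :=
    IsLocalMin.comp_continuous (by simpa using h) (by fun_prop)
  have hev := Filter.Eventually.mono hline fun s hs => sub_nonneg.2 hs
  simp only [Function.comp_apply, zero_smul, add_zero, quarticObjective_add_smul_sub] at hev
  obtain ⟨hgrad, hhess⟩ := eq_zero_and_nonneg_of_eventually_nonneg_quartic hev
  exact ⟨hgrad, by linarith⟩

lemma quarticObjective_stationary (h : IsLocalMin (quarticObjective α ψ ν) w) (i : ι) :
    ψ i = (multiplier ν w + α i) * w i := by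
  classical
  have := (h.quarticObjective_optimality (Pi.single i 1)).1
  simp only [Pi.single_apply, mul_ite, mul_one, mul_zero, sum_ite_eq', mem_univ, if_true] at this
  linarith

lemma quarticObjective_hessian_pair_nonneg (h : IsLocalMin (quarticObjective α ψ ν) w)
    {i j : ι} (hij : i ≠ j) (a b : ℝ) :
    0 ≤ multiplier ν w * (a ^ 2 + b ^ 2) + (w i * a + w j * b) ^ 2
      + (α i * a ^ 2 + α j * b ^ 2) := by
  classical
  have := (h.quarticObjective_optimality (Function.update (Function.update 0 i a) j b)).2
  rw [Fintype.sum_apply_update (fun _ y => y ^ 2), Fintype.sum_apply_update (fun _ y => y ^ 2),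
    Fintype.sum_apply_update (fun k y => w k * y), Fintype.sum_apply_update (fun k y => w k * y),
    Fintype.sum_apply_update (fun k y => α k * y ^ 2),
    Fintype.sum_apply_update (fun k y => α k * y ^ 2)] at this
  simpa [Function.update_of_ne hij.symm] using this

lemma quarticObjective_apply_eq_zero (h : IsLocalMin (quarticObjective α ψ ν) w)
    {i j : ι} (hij : i ≠ j) (hwj : w j = 0) (hi : multiplier ν w + α i < 0)
    (hj : multiplier ν w + α j ≤ 0) : w i = 0 := by
  classical
  set σ := multiplier ν w
  -- rotation of `(w i, w j) = (w i, 0)` in the `(i, j)`-plane; it stays on the sphere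
  set u : ℝ → ι → ℝ := fun θ =>
    Function.update (Function.update w i (w i * Real.cos θ)) j (w i * Real.sin θ)
  have hu0 : u 0 = w := by
    simp only [u, Real.cos_zero, Real.sin_zero, mul_one, mul_zero, Function.update_eq_self]
    rw [← hwj, Function.update_eq_self]
  have hnorm (θ : ℝ) : ∑ k, u θ k ^ 2 = ∑ k, w k ^ 2 := by
    rw [Fintype.sum_apply_update (fun _ y => y ^ 2), Fintype.sum_apply_update (fun _ y => y ^ 2)]
    simp only [Function.update_of_ne hij.symm, hwj]
    linear_combination w i ^ 2 * Real.sin_sq_add_cos_sq θ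
  have hdiff (θ : ℝ) : quarticObjective α ψ ν (u θ) - quarticObjective α ψ ν w
      = 1 / 2 * ((σ + α i) * (w i * (Real.cos θ - 1)) ^ 2
        + (σ + α j) * (w i * Real.sin θ) ^ 2) := by
    rw [quarticObjective_sub_of_sum_sq_eq α ψ ν h.quarticObjective_stationary (hnorm θ),
      Fintype.sum_apply_update (fun k y => (σ + α k) * (y - w k) ^ 2),
      Fintype.sum_apply_update (fun k y => (σ + α k) * (y - w k) ^ 2)]
    simp only [Function.update_of_ne hij.symm, hwj, sub_self, ne_eq, OfNat.ofNat_ne_zero,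
      not_false_eq_true, zero_pow, mul_zero, sum_const_zero]
    ring
  have hev : ∀ᶠ θ in 𝓝 0, 0 ≤ quarticObjective α ψ ν (u θ) - quarticObjective α ψ ν w := by
    have hcont : Continuous u := by fun_prop
    have := IsLocalMin.comp_continuous (hu0 ▸ h) hcont.continuousAt
    exact Filter.Eventually.mono this fun θ hθ => sub_nonneg.2 (by simpa [hu0] using hθ)
  have hsmall : Set.Ioo (-(2 * Real.pi)) (2 * Real.pi) ∈ 𝓝 0 :=
    Ioo_mem_nhds (by linarith [Real.pi_pos]) (by positivity)
  obtain ⟨θ, ⟨hθ, hθπ⟩, hθ0⟩ := (((hev.and hsmall).filter_mono nhdsWithin_le_nhds).and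
    (self_mem_nhdsWithin (s := {0}ᶜ))).exists
  have hcos : Real.cos θ - 1 ≠ 0 :=
    sub_ne_zero.2 fun hc => hθ0 ((Real.cos_eq_one_iff_of_lt_of_lt hθπ.1 hθπ.2).1 hc)
  rw [hdiff] at hθ
  by_contra hwi
  have : 0 < (w i * (Real.cos θ - 1)) ^ 2 := by positivity
  nlinarith [sq_nonneg (w i * Real.sin θ)]

end IsLocalMin

theorem stmt2 {n : ℕ} (hn : 2 ≤ n) (α ψ : Fin n → ℝ) (ν : ℝ)
    (h12 : α ⟨0, by omega⟩ < α ⟨1, hn⟩)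
    (g : (Fin n → ℝ) → ℝ)
    (hg : ∀ w, g w = (1/2) * ((1/2) * ∑ i, (w i)^2 - ν)^2
        + (1/2) * ∑ i, α i * (w i)^2 - ∑ i, ψ i * w i)
    (w : Fin n → ℝ) (hmin : IsLocalMin g w) :
    (1/2) * ∑ j, (w j)^2 - ν + α ⟨1, hn⟩ > 0 := by
  obtain rfl : g = quarticObjective α ψ ν := funext hg
  set i₀ : Fin n := ⟨0, by omega⟩
  set i₁ : Fin n := ⟨1, hn⟩
  have hne : i₀ ≠ i₁ := by simp [i₀, i₁, Fin.ext_iff]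
  by_contra! h₁
  change multiplier ν w + α i₁ ≤ 0 at h₁
  have h₀ : multiplier ν w + α i₀ < 0 := by linarith
  have hw₀ : w i₀ ≠ 0 := by
    intro hw
    have := hmin.quarticObjective_hessian_pair_nonneg hne 1 0
    simp only [hw] at this
    linarith
  have hw₁ : w i₁ = 0 := by
    have hpair := hmin.quarticObjective_hessian_pair_nonneg hne (w i₁) (-w i₀)
    have h₁' : (multiplier ν w + α i₁) * w i₀ ^ 2 ≤ 0 :=
      mul_nonpos_of_nonpos_of_nonneg h₁ (sq_nonneg _)
    have : 0 ≤ (multiplier ν w + α i₀) * w i₁ ^ 2 := by linarith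
    exact pow_eq_zero_iff two_ne_zero |>.1 <|
      le_antisymm (nonpos_of_mul_nonneg_right this h₀) (sq_nonneg _)
  exact hw₀ (hmin.quarticObjective_apply_eq_zero hne hw₁ h₀ h₁)
end

section
/- The function g(w) = (1/2)((1/2)‖w‖² − ν)² + (1/2)wᵀDw − ψᵀw has at most one local maximizer. -/
/-!
Along the line `t ↦ w₁ + t • (w₂ - w₁)` through two local maximizers, `g` is a quartic polynomial
in `t` with leading coefficient `‖w₂ - w₁‖⁴ / 8 > 0`. Its derivative is a cubic with positive
leading coefficient vanishing at `0` and `1`, so it factors as `4a t (t - 1) (t - m)`;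
wherever the third root `m` lies, the derivative has a constant sign on an interval adjacent to
`0` or `1` that prevents that point from being a local maximum.
-/

open Finset

theorem StrictMonoOn.not_isLocalMax_left {α β : Type*} [TopologicalSpace α] [LinearOrder α]
    [OrderTopology α] [DenselyOrdered α] [Preorder β] {f : α → β} {x y : α} (hxy : x < y)
    (hf : StrictMonoOn f (Set.Icc x y)) : ¬IsLocalMax f x := by
  intro hx
  have := nhdsGT_neBot_of_exists_gt ⟨y, hxy⟩
  obtain ⟨t, htx, ht⟩ := ((hx.filter_mono nhdsWithin_le_nhds).and (Ioo_mem_nhdsGT hxy)).exists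
  exact (hf (Set.left_mem_Icc.2 hxy.le) (Set.Ioo_subset_Icc_self ht) ht.1).not_ge htx

theorem StrictAntiOn.not_isLocalMax_right {α β : Type*} [TopologicalSpace α] [LinearOrder α]
    [OrderTopology α] [DenselyOrdered α] [Preorder β] {f : α → β} {x y : α} (hxy : x < y)
    (hf : StrictAntiOn f (Set.Icc x y)) : ¬IsLocalMax f y := by
  intro hy
  have := nhdsLT_neBot_of_exists_lt ⟨x, hxy⟩
  obtain ⟨t, hty, ht⟩ := ((hy.filter_mono nhdsWithin_le_nhds).and (Ioo_mem_nhdsLT hxy)).exists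
  exact (hf (Set.Ioo_subset_Icc_self ht) (Set.right_mem_Icc.2 hxy.le) ht.2).not_ge hty

theorem cubic_eq_mul_of_roots {A B C D s r : ℝ} (hA : A ≠ 0) (hsr : s ≠ r)
    (hs : A * s ^ 3 + B * s ^ 2 + C * s + D = 0) (hr : A * r ^ 3 + B * r ^ 2 + C * r + D = 0)
    (t : ℝ) :
    A * t ^ 3 + B * t ^ 2 + C * t + D = A * (t - s) * (t - r) * (t - (-B / A - s - r)) := by
  have hC : C = -(A * (s ^ 2 + s * r + r ^ 2) + B * (s + r)) := by
    have : (s - r) * (A * (s ^ 2 + s * r + r ^ 2) + B * (s + r) + C) = 0 := by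
      linear_combination hs - hr
    linear_combination (mul_eq_zero.1 this).resolve_left (sub_ne_zero.2 hsr)
  have hD : D = -(A * s ^ 3 + B * s ^ 2 + C * s) := by linear_combination hs
  rw [hD, hC]
  field_simp
  ring

theorem eq_of_isLocalMax_quartic {a b c d e s r : ℝ} (ha : 0 < a)
    (hs : IsLocalMax (fun t ↦ a * t ^ 4 + b * t ^ 3 + c * t ^ 2 + d * t + e) s)
    (hr : IsLocalMax (fun t ↦ a * t ^ 4 + b * t ^ 3 + c * t ^ 2 + d * t + e) r) : s = r := by
  wlog hsr : s < r generalizing s r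
  · rcases (not_lt.1 hsr).lt_or_eq with h | h
    exacts [(this hr hs h).symm, h.symm]
  set q := fun t : ℝ ↦ a * t ^ 4 + b * t ^ 3 + c * t ^ 2 + d * t + e
  set q' := fun t : ℝ ↦ 4 * a * t ^ 3 + 3 * b * t ^ 2 + 2 * c * t + d
  have hq : ∀ t, HasDerivAt q (q' t) t := fun t ↦ by
    have := (((((hasDerivAt_pow 4 t).const_mul a).add ((hasDerivAt_pow 3 t).const_mul b)).add
      ((hasDerivAt_pow 2 t).const_mul c)).add ((hasDerivAt_id' t).const_mul d)).add_const e
    exact this.congr_deriv (by norm_num [q']; ring : _ = q' t)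
  have hmono {x y : ℝ} (hxy : x < y) (hpos : ∀ t ∈ Set.Ioo x y, 0 < q' t) :
      StrictMonoOn q (Set.Icc x y) :=
    strictMonoOn_of_hasDerivWithinAt_pos (convex_Icc x y)
      (fun t _ ↦ (hq t).continuousAt.continuousWithinAt) (fun t _ ↦ (hq t).hasDerivWithinAt)
      (by simpa only [interior_Icc])
  have hanti {x y : ℝ} (hxy : x < y) (hneg : ∀ t ∈ Set.Ioo x y, q' t < 0) :
      StrictAntiOn q (Set.Icc x y) :=
    strictAntiOn_of_hasDerivWithinAt_neg (convex_Icc x y)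
      (fun t _ ↦ (hq t).continuousAt.continuousWithinAt) (fun t _ ↦ (hq t).hasDerivWithinAt)
      (by simpa only [interior_Icc])
  -- Vieta: the three roots of `q'` sum to `-3b / 4a`.
  set m := -(3 * b) / (4 * a) - s - r
  have hfac : ∀ t, q' t = 4 * a * (t - s) * (t - r) * (t - m) :=
    cubic_eq_mul_of_roots (by positivity) hsr.ne (hs.hasDerivAt_eq_zero (hq s))
      (hr.hasDerivAt_eq_zero (hq r))
  exfalso
  rcases le_or_gt r m with hrm | hmr
  · refine (hmono hsr fun t ht ↦ ?_).not_isLocalMax_left hsr hs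
    rw [hfac]
    have : 0 < (t - s) * ((r - t) * (m - t)) := by
      apply mul_pos ?_ (mul_pos ?_ ?_) <;> linarith [ht.1, ht.2]
    nlinarith
  rcases le_or_gt m s with hms | hsm
  · refine (hanti hsr fun t ht ↦ ?_).not_isLocalMax_right hsr hr
    rw [hfac]
    have : 0 < (t - s) * (t - m) * (r - t) := by
      apply mul_pos (mul_pos ?_ ?_) <;> linarith [ht.1, ht.2]
    nlinarith
  · refine (hmono (lt_add_one r) fun t ht ↦ ?_).not_isLocalMax_left (lt_add_one r) hr
    rw [hfac]
    have : 0 < (t - s) * (t - r) * (t - m) := by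
      apply mul_pos (mul_pos ?_ ?_) <;> linarith [ht.1]
    nlinarith

section LineRestriction

variable {ι R : Type*} [CommSemiring R] (s : Finset ι) (β x v : ι → R) (t : R)

theorem Finset.sum_mul_add_mul_sq :
    ∑ i ∈ s, β i * (x i + t * v i) ^ 2 =
      t ^ 2 * ∑ i ∈ s, β i * v i ^ 2 + 2 * t * ∑ i ∈ s, β i * x i * v i
        + ∑ i ∈ s, β i * x i ^ 2 := by
  simp only [mul_sum, ← sum_add_distrib]
  exact sum_congr rfl fun i _ ↦ by ring

theorem Finset.sum_add_mul_sq :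
    ∑ i ∈ s, (x i + t * v i) ^ 2 =
      t ^ 2 * ∑ i ∈ s, v i ^ 2 + 2 * t * ∑ i ∈ s, x i * v i + ∑ i ∈ s, x i ^ 2 := by
  simpa using sum_mul_add_mul_sq s 1 x v t

theorem Finset.sum_mul_add_mul :
    ∑ i ∈ s, β i * (x i + t * v i) = t * ∑ i ∈ s, β i * v i + ∑ i ∈ s, β i * x i := by
  simp only [mul_sum, ← sum_add_distrib]
  exact sum_congr rfl fun i _ ↦ by ring

end LineRestriction

theorem stmt16_general {n : ℕ} (α ψ : Fin n → ℝ) (ν : ℝ)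
    (g : (Fin n → ℝ) → ℝ)
    (hg : ∀ w, g w = (1/2) * ((1/2) * ∑ i, (w i)^2 - ν)^2
        + (1/2) * ∑ i, α i * (w i)^2 - ∑ i, ψ i * w i)
    (w₁ w₂ : Fin n → ℝ) (h₁ : IsLocalMax g w₁) (h₂ : IsLocalMax g w₂) :
    w₁ = w₂ := by
  by_contra hne
  set v := w₂ - w₁
  set S := ∑ i, v i ^ 2
  set P := ∑ i, w₁ i * v i
  set u := (1/2) * ∑ i, w₁ i ^ 2 - ν
  have hS : S ≠ 0 := fun h ↦ hne <| funext fun i ↦ by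
    simpa [v, sub_eq_zero, eq_comm] using
      congrFun ((Fintype.sum_eq_zero_iff_of_nonneg fun i ↦ sq_nonneg (v i)).1 h) i
  have hline : (g ∘ fun t : ℝ ↦ w₁ + t • v) = fun t ↦ S ^ 2 / 8 * t ^ 4 + S * P / 2 * t ^ 3
      + (P ^ 2 + u * S + ∑ i, α i * v i ^ 2) / 2 * t ^ 2
      + (u * P + ∑ i, α i * w₁ i * v i - ∑ i, ψ i * v i) * t
      + (u ^ 2 / 2 + (1/2) * ∑ i, α i * w₁ i ^ 2 - ∑ i, ψ i * w₁ i) := by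
    funext t
    simp only [Function.comp_apply, hg, Pi.add_apply, Pi.smul_apply, smul_eq_mul,
      sum_add_mul_sq, sum_mul_add_mul_sq, sum_mul_add_mul]
    ring
  have hmax {t : ℝ} (ht : IsLocalMax g (w₁ + t • v)) :
      IsLocalMax (g ∘ fun t : ℝ ↦ w₁ + t • v) t :=
    ht.comp_continuous (g := fun t : ℝ ↦ w₁ + t • v) (by fun_prop)
  have hq₀ := hmax (t := 0) (by simpa using h₁)
  have hq₁ := hmax (t := 1) (by simpa [v] using h₂)
  rw [hline] at hq₀ hq₁
  exact zero_ne_one (eq_of_isLocalMax_quartic (by positivity) hq₀ hq₁)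

theorem stmt16 {n : ℕ} (hn : 1 ≤ n) (α ψ : Fin n → ℝ) (hα : Monotone α) (ν : ℝ)
    (g : (Fin n → ℝ) → ℝ)
    (hg : ∀ w, g w = (1/2) * ((1/2) * ∑ i, (w i)^2 - ν)^2
        + (1/2) * ∑ i, α i * (w i)^2 - ∑ i, ψ i * w i)
    (w₁ w₂ : Fin n → ℝ) (h₁ : IsLocalMax g w₁) (h₂ : IsLocalMax g w₂) :
    w₁ = w₂ :=
  stmt16_general α ψ ν g hg w₁ w₂ h₁ h₂
end

section
/- The secular function h(t) = Σᵢ 4ψᵢ²/(t − 2ν + 2αᵢ)² − t is strictly decreasing on (2ν − 2α₁, ∞), and hence has at most one root there; consequently g has at most one critical point w with ‖w‖² > 2ν − 2α₁. -/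
/-!
Each summand `4ψᵢ² / (t - 2ν + 2αᵢ)²` is nonincreasing in `t` once its denominator is positive,
which is the case for all `i` when `t > 2ν - 2α₁`, so `h` is strictly decreasing there and has at
most one root. A critical point `w` with `s = ‖w‖² > 2ν - 2α₁` has `wᵢ = ψᵢ / (s/2 - ν + αᵢ)`, and
summing the squares of this gives `h s = 0`; hence `s`, and with it `w`, is unique.
-/

open Finset

noncomputable def secularFun {ι : Type*} [Fintype ι] (α ψ : ι → ℝ) (ν t : ℝ) : ℝ :=
  (∑ i, 4 * ψ i ^ 2 / (t - 2 * ν + 2 * α i) ^ 2) - t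

section Secular

variable {ι : Type*} [Fintype ι] (α ψ : ι → ℝ) (ν : ℝ)

theorem secularFun_strictAntiOn {a : ℝ} (ha : ∀ i, a ≤ α i) :
    StrictAntiOn (secularFun α ψ ν) (Set.Ioi (2 * ν - 2 * a)) := by
  intro x hx y hy hxy
  simp only [Set.mem_Ioi] at hx
  have hterm : ∀ i, 4 * ψ i ^ 2 / (y - 2 * ν + 2 * α i) ^ 2
      ≤ 4 * ψ i ^ 2 / (x - 2 * ν + 2 * α i) ^ 2 := by
    intro i
    have hxi : 0 < x - 2 * ν + 2 * α i := by linarith [ha i]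
    gcongr
  have hsum := Finset.sum_le_sum fun i (_ : i ∈ univ) => hterm i
  simp only [secularFun]
  linarith

variable {α ψ ν}

theorem eq_div_of_isCritical {w : ι → ℝ}
    (hw : ∀ i, ((1/2) * ∑ j, w j ^ 2 - ν) * w i + α i * w i = ψ i)
    (hpos : ∀ i, 0 < (1/2) * ∑ j, w j ^ 2 - ν + α i) (i : ι) :
    w i = ψ i / ((1/2) * ∑ j, w j ^ 2 - ν + α i) := by
  rw [eq_div_iff (hpos i).ne']
  linear_combination hw i

theorem secularFun_eq_zero_of_isCritical {w : ι → ℝ}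
    (hw : ∀ i, ((1/2) * ∑ j, w j ^ 2 - ν) * w i + α i * w i = ψ i)
    (hpos : ∀ i, 0 < (1/2) * ∑ j, w j ^ 2 - ν + α i) :
    secularFun α ψ ν (∑ j, w j ^ 2) = 0 := by
  have hterm : ∀ i, 4 * ψ i ^ 2 / ((∑ j, w j ^ 2) - 2 * ν + 2 * α i) ^ 2 = w i ^ 2 := by
    intro i
    have hne := (hpos i).ne'
    rw [eq_div_of_isCritical hw hpos i]
    field_simp
    ring
  simp only [secularFun, hterm, sub_self]

end Secular

theorem stmt18_general {n : ℕ} (hn : 1 ≤ n) (α ψ : Fin n → ℝ) (hα : Monotone α) (ν : ℝ)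
    (h : ℝ → ℝ)
    (hh : ∀ t, h t = (∑ i, 4 * (ψ i)^2 / (t - 2 * ν + 2 * α i)^2) - t) :
    StrictAntiOn h (Set.Ioi (2 * ν - 2 * α ⟨0, hn⟩)) ∧
    (∀ t₁ ∈ Set.Ioi (2 * ν - 2 * α ⟨0, hn⟩), ∀ t₂ ∈ Set.Ioi (2 * ν - 2 * α ⟨0, hn⟩),
      h t₁ = 0 → h t₂ = 0 → t₁ = t₂) ∧
    (∀ w w' : Fin n → ℝ,
      (∀ i, ((1/2) * ∑ j, (w j)^2 - ν) * w i + α i * w i = ψ i) →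
      (∀ i, ((1/2) * ∑ j, (w' j)^2 - ν) * w' i + α i * w' i = ψ i) →
      2 * ν - 2 * α ⟨0, hn⟩ < ∑ j, (w j)^2 →
      2 * ν - 2 * α ⟨0, hn⟩ < ∑ j, (w' j)^2 →
      w = w') := by
  obtain rfl : h = secularFun α ψ ν := funext hh
  have hα₁ : ∀ i, α ⟨0, hn⟩ ≤ α i := fun i => hα (Nat.zero_le i.val)
  have hanti := secularFun_strictAntiOn α ψ ν hα₁
  have hpos : ∀ w : Fin n → ℝ, 2 * ν - 2 * α ⟨0, hn⟩ < ∑ j, w j ^ 2 →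
      ∀ i, 0 < (1/2) * ∑ j, w j ^ 2 - ν + α i := fun w hs i => by linarith [hα₁ i]
  refine ⟨hanti, fun t₁ ht₁ t₂ ht₂ h₁ h₂ => hanti.injOn ht₁ ht₂ (h₁.trans h₂.symm), ?_⟩
  intro w w' hw hw' hs hs'
  have hsum : ∑ j, w j ^ 2 = ∑ j, w' j ^ 2 := hanti.injOn hs hs' <|
    (secularFun_eq_zero_of_isCritical hw (hpos w hs)).trans
      (secularFun_eq_zero_of_isCritical hw' (hpos w' hs')).symm
  funext i
  rw [eq_div_of_isCritical hw (hpos w hs), eq_div_of_isCritical hw' (hpos w' hs'), hsum]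

theorem stmt18 {n : ℕ} (hn : 1 ≤ n) (α ψ : Fin n → ℝ) (hα : Monotone α) (ν : ℝ)
    (g : (Fin n → ℝ) → ℝ)
    (hg : ∀ w, g w = (1/2) * ((1/2) * ∑ i, (w i)^2 - ν)^2
        + (1/2) * ∑ i, α i * (w i)^2 - ∑ i, ψ i * w i)
    (h : ℝ → ℝ)
    (hh : ∀ t, h t = (∑ i, 4 * (ψ i)^2 / (t - 2 * ν + 2 * α i)^2) - t) :
    StrictAntiOn h (Set.Ioi (2 * ν - 2 * α ⟨0, hn⟩)) ∧
    (∀ t₁ ∈ Set.Ioi (2 * ν - 2 * α ⟨0, hn⟩), ∀ t₂ ∈ Set.Ioi (2 * ν - 2 * α ⟨0, hn⟩),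
      h t₁ = 0 → h t₂ = 0 → t₁ = t₂) ∧
    (∀ w w' : Fin n → ℝ,
      (∀ i, ((1/2) * ∑ j, (w j)^2 - ν) * w i + α i * w i = ψ i) →
      (∀ i, ((1/2) * ∑ j, (w' j)^2 - ν) * w' i + α i * w' i = ψ i) →
      2 * ν - 2 * α ⟨0, hn⟩ < ∑ j, (w j)^2 →
      2 * ν - 2 * α ⟨0, hn⟩ < ∑ j, (w' j)^2 →
      w = w') :=
  stmt18_general hn α ψ hα ν h hh
end
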